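/- Under the NormalHedge dynamics, suppose that for some round t₀ and some constant 0 < δ ≤ 1/2 one has c_{t₀} ≥ (4 ln² N)/δ + (16 ln N)/δ³. Then for every round t ≥ t₀, c_{t+1} − c_t ≤ (3/2)(1 + 49.19 δ). (Lemma 3.) -/

import Mathlib

open Real Finset Filter

/-- The NormalHedge dynamics with `N` actions.  Rounds are indexed by `t = 1, 2, …`;
`loss i t` is the loss of action `i` in round `t`, `p i t` its weight in round `t`,
`R i t` its cumulative regret after `t` rounds, and `c t` the scale parameter. -/
structure NormalHedge (N : ℕ) where
  hN : 2 ≤ N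
  loss : Fin N → ℕ → ℝ
  p : Fin N → ℕ → ℝ
  R : Fin N → ℕ → ℝ
  c : ℕ → ℝ
  loss_mem : ∀ i t, 1 ≤ t → loss i t ∈ Set.Icc (0 : ℝ) 1
  p_one : ∀ i, p i 1 = 1 / N
  R_zero : ∀ i, R i 0 = 0
  R_rec : ∀ i t, R i (t + 1) = R i t + ((∑ j, p j (t + 1) * loss j (t + 1)) - loss i (t + 1))
  c_pos : ∀ t, 1 ≤ t → 0 < c t
  c_eq : ∀ t, 1 ≤ t →
    (1 / N : ℝ) * ∑ i, Real.exp (max (R i t) 0 ^ 2 / (2 * c t)) = Real.exp 1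
  p_rec : ∀ i t, 1 ≤ t →
    p i (t + 1) = (max (R i t) 0 / c t) * Real.exp (max (R i t) 0 ^ 2 / (2 * c t)) /
      ∑ j, (max (R j t) 0 / c t) * Real.exp (max (R j t) 0 ^ 2 / (2 * c t))

/-!
`c_t` is the scale at which `Φ(R_t, c) = ∑ᵢ exp ([R_{i,t}]₊² / 2c)` equals `N e`, and `Φ(R, ·)` is
strictly decreasing, so it suffices to show `Φ(R_{t+1}, c_t + d) ≤ N e` for
`d = (3/2)(1 + 49.19 δ)`. Expand `x ↦ exp ([x]₊² / 2c)` to second order along the regret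
increments: the first-order term vanishes because `p_{t+1}` is proportional to its derivative.
This gives `c_t ≤ c_{t+1}` (propagating the hypothesis from `t₀` to `t`) and
`Φ(R_{t+1}, c_t) ≤ N e + curvature / c_t`. Raising the scale by `d` lowers the potential by at
least `d / c_t` times `-c ∂Φ/∂c`, and once `c_t ≥ 16 ln N / δ³` all `[R_{i,t}]₊` are `O(δ c_t)`,
so the curvature is at most `(3/2 + 34 δ)` times that slope.
-/

lemma two_mul_exp_sub_exp_one_le (x : ℝ) : 2 * exp x - exp 1 ≤ x * exp x := by
  have h : exp x * (1 - (x - 1)) ≤ exp x * exp (-(x - 1)) :=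
    mul_le_mul_of_nonneg_left (one_sub_le_exp_neg _) (exp_pos x).le
  rw [← exp_add, show x + -(x - 1) = 1 by ring] at h
  linarith

lemma exp_le_one_add_two_mul {s : ℝ} (h0 : 0 ≤ s) (h1 : s ≤ 1) : exp s ≤ 1 + 2 * s := by
  have h := convexOn_exp.2 (Set.mem_univ 0) (Set.mem_univ 1) (sub_nonneg.2 h1) h0
    (sub_add_cancel 1 s)
  simp only [smul_eq_mul, mul_zero, mul_one, zero_add, exp_zero] at h
  nlinarith [exp_one_lt_three]

lemma exp_le_quadratic_of_nonpos {u : ℝ} (hu : u ≤ 0) : exp u ≤ 1 + u + u ^ 2 / 2 := by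
  have h := quadratic_le_exp_of_nonneg (neg_nonneg.2 hu)
  have hinv : exp u * exp (-u) = 1 := by rw [← exp_add, add_neg_cancel, exp_zero]
  nlinarith [exp_pos u, mul_le_mul_of_nonneg_left h (exp_pos u).le, sq_nonneg (u ^ 2)]

lemma exp_le_one_add_add_sq_mul_exp_max (u : ℝ) :
    exp u ≤ 1 + u + u ^ 2 / 2 * exp (max u 0) := by
  rcases le_total u 0 with hu | hu
  · simpa [max_eq_right hu] using exp_le_quadratic_of_nonpos hu
  rw [max_eq_left hu]
  rcases lt_or_ge u 2 with hu2 | hu2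
  · have h := exp_le_two_add_div_two_sub hu hu2
    rw [le_div_iff₀ (by linarith)] at h
    nlinarith [mul_le_mul_of_nonneg_left (add_one_le_exp u) hu]
  · have h1 : 1 ≤ u ^ 2 / 2 := by nlinarith
    nlinarith [mul_le_mul_of_nonneg_right h1 (exp_pos u).le]

lemma exp_add_mul_mul_exp_le (x k : ℝ) : exp x + k * (x * exp x) ≤ exp (x * (1 + k)) := by
  rw [show x * (1 + k) = x + k * x by ring, exp_add]
  nlinarith [add_one_le_exp (k * x), exp_pos x]

lemma mul_exp_le_of_le_mul_of_sub_le {x y K D : ℝ} (hx : 0 ≤ x) (hxy : x ≤ K * y)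
    (hD : x - y ≤ D) : x * exp x ≤ K * exp D * (y * exp y) := by
  have hexp : exp x ≤ exp D * exp y := by rw [← exp_add]; exact exp_le_exp.2 (by linarith)
  calc x * exp x ≤ (K * y) * (exp D * exp y) :=
        mul_le_mul hxy hexp (exp_pos x).le (hx.trans hxy)
    _ = K * exp D * (y * exp y) := by ring

lemma sq_max_add_two_mul_le (R r : ℝ) : max R 0 ^ 2 + 2 * max R 0 * r ≤ max (R + r) 0 ^ 2 := by
  rcases le_total R 0 with hR | hR
  · simp [max_eq_right hR]
  rw [max_eq_left hR]
  rcases le_total (R + r) 0 with hRr | hRr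
  · rw [max_eq_right hRr]; nlinarith
  · rw [max_eq_left hRr]; nlinarith [sq_nonneg r]

lemma sq_max_add_le (R r : ℝ) : max (R + r) 0 ^ 2 ≤ (max R 0 + r) ^ 2 := by
  rcases le_total (R + r) 0 with hRr | hRr
  · rw [max_eq_right hRr, zero_pow two_ne_zero]; exact sq_nonneg _
  · rw [max_eq_left hRr]
    exact pow_le_pow_left₀ hRr (by linarith [le_max_left R 0]) 2

lemma sum_weightedMean_sub_mul_eq_zero {ι : Type*} [Fintype ι] (w l : ι → ℝ)
    (hW : ∑ k, w k ≠ 0) : ∑ i, (∑ j, w j / (∑ k, w k) * l j - l i) * w i = 0 := by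
  simp only [sub_mul, sum_sub_distrib, ← mul_sum]
  rw [sum_mul, sub_eq_zero]
  exact sum_congr rfl fun j _ => by field_simp

noncomputable def hedgePot (c x : ℝ) : ℝ := exp (max x 0 ^ 2 / (2 * c))

/-- The derivative of `hedgePot c`. -/
noncomputable def hedgeWeight (c x : ℝ) : ℝ := max x 0 / c * hedgePot c x

/-- `c` times half the second derivative `(1 / c + y² / c²) · hedgePot c y` of `hedgePot c`
at `y = [x]₊ + 1`, which dominates it on `[x - 1, x + 1]`. -/
noncomputable def hedgeCurv (c x : ℝ) : ℝ :=
  exp ((max x 0 + 1) ^ 2 / (2 * c)) / 2 +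
    (max x 0 + 1) ^ 2 / (2 * c) * exp ((max x 0 + 1) ^ 2 / (2 * c))

lemma hedgePot_add_mul_hedgeWeight_le {c : ℝ} (hc : 0 < c) (R r : ℝ) :
    hedgePot c R + r * hedgeWeight c R ≤ hedgePot c (R + r) := by
  unfold hedgeWeight hedgePot
  set a := max R 0
  calc exp (a ^ 2 / (2 * c)) + r * (a / c * exp (a ^ 2 / (2 * c)))
      = exp (a ^ 2 / (2 * c)) * (r * a / c + 1) := by ring
    _ ≤ exp (a ^ 2 / (2 * c)) * exp (r * a / c) :=
      mul_le_mul_of_nonneg_left (add_one_le_exp _) (exp_pos _).le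
    _ = exp ((a ^ 2 + 2 * a * r) / (2 * c)) := by rw [← exp_add]; congr 1; field_simp
    _ ≤ exp (max (R + r) 0 ^ 2 / (2 * c)) :=
      exp_le_exp.2 (div_le_div_of_nonneg_right (sq_max_add_two_mul_le R r) (by positivity))

lemma hedgePot_add_le {c : ℝ} (hc : 0 < c) (R : ℝ) {r : ℝ} (hr : |r| ≤ 1) :
    hedgePot c (R + r) ≤ hedgePot c R + r * hedgeWeight c R + hedgeCurv c R / c := by
  obtain ⟨hr1, hr2⟩ := abs_le.1 hr
  have hc2 : 0 < 2 * c := by positivity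
  unfold hedgeCurv hedgeWeight hedgePot
  set a := max R 0
  have ha : 0 ≤ a := le_max_right R 0
  set y := (a + 1) ^ 2 / (2 * c)
  set s := a ^ 2 / (2 * c)
  set u := (2 * a * r + r ^ 2) / (2 * c) with hu
  have hsy : s ≤ y := div_le_div_of_nonneg_right (by nlinarith) hc2.le
  have hsuy : s + max u 0 ≤ y := by
    have hsu : s + u = (a + r) ^ 2 / (2 * c) := by simp only [s, u]; ring
    rw [add_max, add_zero, hsu]
    exact max_le (div_le_div_of_nonneg_right (by nlinarith) hc2.le) hsy
  have hu2 : u ^ 2 / 2 ≤ y / c := by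
    have h : (2 * a * r + r ^ 2) ^ 2 ≤ (2 * a + 1) ^ 2 := sq_le_sq' (by nlinarith) (by nlinarith)
    have hl : u ^ 2 / 2 = (2 * a * r + r ^ 2) ^ 2 / (8 * c ^ 2) := by simp only [u]; ring
    have hy : y / c = (2 * a + 2) ^ 2 / (8 * c ^ 2) := by simp only [y]; field_simp; ring
    rw [hl, hy]
    exact div_le_div_of_nonneg_right (by nlinarith) (by positivity)
  calc exp (max (R + r) 0 ^ 2 / (2 * c)) ≤ exp ((a + r) ^ 2 / (2 * c)) :=
        exp_le_exp.2 (div_le_div_of_nonneg_right (sq_max_add_le R r) hc2.le)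
    _ = exp s * exp u := by rw [← exp_add]; congr 1; ring
    _ ≤ exp s * (1 + u + u ^ 2 / 2 * exp (max u 0)) :=
        mul_le_mul_of_nonneg_left (exp_le_one_add_add_sq_mul_exp_max u) (exp_pos s).le
    _ = exp s + r * (a / c * exp s) + r ^ 2 / (2 * c) * exp s +
          u ^ 2 / 2 * exp (s + max u 0) := by rw [exp_add, hu]; field_simp; ring
    _ ≤ exp s + r * (a / c * exp s) + 1 / (2 * c) * exp y + y / c * exp y := by
        gcongr
        nlinarith
    _ = _ := by ring

lemma hedgePot_le_hedgePot {c c' : ℝ} (hc : 0 < c) (hcc' : c ≤ c') (x : ℝ) :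
    hedgePot c' x ≤ hedgePot c x :=
  exp_le_exp.2 (div_le_div_of_nonneg_left (sq_nonneg _) (by positivity) (by linarith))

lemma hedgePot_lt_hedgePot {c c' : ℝ} (hc : 0 < c) (hcc' : c < c') {x : ℝ} (hx : 0 < x) :
    hedgePot c' x < hedgePot c x :=
  exp_lt_exp.2 (div_lt_div_of_pos_left (pow_pos (lt_max_of_lt_left hx) 2) (by positivity)
    (by linarith))

lemma le_of_sq_le_cube_mul_sq {δ c a : ℝ} (hδ : 0 < δ) (hδ1 : δ ≤ 1 / 2) (hc : 0 < c)
    (ha0 : 0 ≤ a) (ha : a ^ 2 ≤ 0.31 * δ ^ 3 * c ^ 2) : a ≤ 0.4 * δ * c := by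
  have hδ2 : δ * (δ ^ 2 * c ^ 2) ≤ 1 / 2 * (δ ^ 2 * c ^ 2) :=
    mul_le_mul_of_nonneg_right hδ1 (by positivity)
  exact (pow_le_pow_iff_left₀ ha0 (by positivity) two_ne_zero).1 (by nlinarith)

lemma exp_add_one_sq_div_le {δ c a : ℝ} (hδ : 0 < δ) (hδ1 : δ ≤ 1 / 2) (hc : 44 ≤ δ * c)
    (ha0 : 0 ≤ a) (ha : a ≤ 0.4 * δ * c) :
    exp ((a + 1) ^ 2 / (2 * c)) ≤ (1 + 0.83 * δ) * exp (a ^ 2 / (2 * c)) := by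
  have hc0 : 0 < c := pos_of_mul_pos_right (by linarith) hδ.le
  have hs0 : 0 ≤ (2 * a + 1) / (2 * c) := by positivity
  have hs : (2 * a + 1) / (2 * c) ≤ 0.415 * δ := by rw [div_le_iff₀ (by positivity)]; nlinarith
  calc exp ((a + 1) ^ 2 / (2 * c)) = exp ((2 * a + 1) / (2 * c)) * exp (a ^ 2 / (2 * c)) := by
        rw [← exp_add]; congr 1; field_simp; ring
    _ ≤ (1 + 0.83 * δ) * exp (a ^ 2 / (2 * c)) := by
        gcongr
        linarith [exp_le_one_add_two_mul hs0 (by linarith)]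

lemma mul_exp_le_of_sq_le {δ c a : ℝ} (hδ : 0 < δ) (hδ1 : δ ≤ 1 / 2) (hc : 44 ≤ δ * c)
    (ha0 : 0 ≤ a) (ha : a ≤ 0.4 * δ * c) (hsmall : a ^ 2 ≤ 2 * δ * c) :
    (a + 1) ^ 2 / (2 * c) * exp ((a + 1) ^ 2 / (2 * c)) ≤ 3.5 * δ := by
  have hc0 : 0 < c := pos_of_mul_pos_right (by linarith) hδ.le
  set y := (a + 1) ^ 2 / (2 * c)
  have hy0 : 0 ≤ y := by positivity
  have hy : y ≤ 1.42 * δ := by simp only [y]; rw [div_le_iff₀ (by positivity)]; nlinarith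
  have hexp := exp_le_one_add_two_mul hy0 (by linarith)
  calc y * exp y ≤ 1.42 * δ * (1 + 2 * (1.42 * δ)) :=
        mul_le_mul hy (hexp.trans (by linarith)) (exp_pos y).le (by positivity)
    _ ≤ 3.5 * δ := by nlinarith

lemma le_mul_of_two_mul_le_sq {δ c a : ℝ} (hδ : 0 < δ) (hc : 11 ≤ δ ^ 3 * c) (ha0 : 0 ≤ a)
    (hbig : 2 * δ * c ≤ a ^ 2) : 4.69 ≤ a * δ := by
  have h : 4.69 ^ 2 ≤ (a * δ) ^ 2 := by
    nlinarith [mul_le_mul_of_nonneg_right hbig (sq_nonneg δ)]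
  exact (pow_le_pow_iff_left₀ (by norm_num) (by positivity) two_ne_zero).1 h

lemma add_one_sq_le_mul_sq {δ a a' : ℝ} (hδ : 0 < δ) (hδ1 : δ ≤ 1 / 2) (haδ : 4.69 ≤ a * δ)
    (ha' : a - 1 ≤ a') : (a + 1) ^ 2 ≤ (1 + 1.2 * δ) * a' ^ 2 := by
  have ha9 : 9.38 ≤ a := by nlinarith
  have h1 : (a - 1) ^ 2 ≤ a' ^ 2 := pow_le_pow_left₀ (by linarith) ha' 2
  have h2 : 4 * a ≤ 1.2 * δ * (a - 1) ^ 2 := by nlinarith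
  nlinarith

lemma add_one_sq_div_sub_sq_div_le {δ c d a a' : ℝ} (hδ : 0 < δ) (hc : 0 < c) (ha1 : 1 ≤ a)
    (ha : a ^ 2 ≤ 0.31 * δ ^ 3 * c ^ 2) (hac : a ≤ 0.4 * δ * c) (hd0 : 0 ≤ d)
    (hd : d * δ ^ 2 ≤ 9.6) (ha' : a - 1 ≤ a') :
    (a + 1) ^ 2 / (2 * c) - a' ^ 2 / (2 * (c + d)) ≤ 2.3 * δ := by
  have h1 : (a - 1) ^ 2 / (2 * (c + d)) ≤ a' ^ 2 / (2 * (c + d)) :=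
    div_le_div_of_nonneg_right (pow_le_pow_left₀ (by linarith) ha' 2) (by positivity)
  have h2 : (a + 1) ^ 2 / (2 * c) - (a - 1) ^ 2 / (2 * (c + d)) =
      2 * a / c + (a - 1) ^ 2 * d / (2 * c * (c + d)) := by field_simp; ring
  have h3 : (a - 1) ^ 2 * d / (2 * c * (c + d)) ≤ a ^ 2 * d / (2 * c * c) := by
    gcongr <;> nlinarith
  have h4 : 2 * a / c ≤ 0.8 * δ := by rw [div_le_iff₀ hc]; linarith
  have h5 : a ^ 2 * d / (2 * c * c) ≤ 1.49 * δ := by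
    rw [div_le_iff₀ (by positivity)]
    nlinarith [mul_le_mul_of_nonneg_right ha hd0, mul_le_mul_of_nonneg_left hd
      (by positivity : 0 ≤ δ * c ^ 2)]
  linarith

lemma exp_le_one_add_sq {s : ℝ} (h0 : 0 ≤ s) (h2 : s ≤ 2) : exp s ≤ (1 + s) ^ 2 := by
  have h := exp_le_one_add_two_mul (s := s / 2) (by positivity) (by linarith)
  rw [show s = s / 2 + s / 2 by ring, exp_add, sq]
  exact mul_le_mul (by linarith) (by linarith) (exp_pos _).le (by positivity)

lemma mul_exp_le_of_le_sq {δ c d a a' : ℝ} (hδ : 0 < δ) (hδ1 : δ ≤ 1 / 2)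
    (hc : 11 ≤ δ ^ 3 * c) (ha0 : 0 ≤ a) (ha : a ^ 2 ≤ 0.31 * δ ^ 3 * c ^ 2) (hd0 : 0 ≤ d)
    (hd : d * δ ^ 2 ≤ 9.6) (ha' : a - 1 ≤ a') (hbig : 2 * δ * c ≤ a ^ 2) :
    (a + 1) ^ 2 / (2 * c) * exp ((a + 1) ^ 2 / (2 * c)) ≤
      (1 + 30 * δ) * (a' ^ 2 / (2 * (c + d)) * exp (a' ^ 2 / (2 * (c + d)))) := by
  have hc0 : 0 < c := pos_of_mul_pos_right (show 0 < δ ^ 3 * c by linarith) (by positivity)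
  have haδ := le_mul_of_two_mul_le_sq hδ hc ha0 hbig
  have hnum := add_one_sq_le_mul_sq hδ hδ1 haδ ha'
  have hden : d ≤ 0.9 * δ * c := by nlinarith
  have hratio : (a + 1) ^ 2 / (2 * c) ≤
      (1 + 1.2 * δ) * (1 + 0.9 * δ) * (a' ^ 2 / (2 * (c + d))) := by
    have hinv : 1 / (2 * c) ≤ (1 + 0.9 * δ) / (2 * (c + d)) := by
      rw [div_le_div_iff₀ (by positivity) (by positivity)]; nlinarith
    calc (a + 1) ^ 2 / (2 * c) = (a + 1) ^ 2 * (1 / (2 * c)) := by ring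
      _ ≤ (1 + 1.2 * δ) * a' ^ 2 * ((1 + 0.9 * δ) / (2 * (c + d))) :=
          mul_le_mul hnum hinv (by positivity) (by positivity)
      _ = _ := by ring
  have hgap := add_one_sq_div_sub_sq_div_le hδ hc0 (by nlinarith) ha
    (le_of_sq_le_cube_mul_sq hδ hδ1 hc0 ha0 ha) hd0 hd ha'
  calc (a + 1) ^ 2 / (2 * c) * exp ((a + 1) ^ 2 / (2 * c))
      ≤ (1 + 1.2 * δ) * (1 + 0.9 * δ) * exp (2.3 * δ) *
          (a' ^ 2 / (2 * (c + d)) * exp (a' ^ 2 / (2 * (c + d)))) :=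
        mul_exp_le_of_le_mul_of_sub_le (by positivity) hratio hgap
    _ ≤ (1 + 30 * δ) * (a' ^ 2 / (2 * (c + d)) * exp (a' ^ 2 / (2 * (c + d)))) := by
        gcongr
        calc (1 + 1.2 * δ) * (1 + 0.9 * δ) * exp (2.3 * δ)
            ≤ (1 + 1.2 * δ) * (1 + 0.9 * δ) * (1 + 2.3 * δ) ^ 2 := by
              gcongr; exact exp_le_one_add_sq (by positivity) (by linarith)
          _ ≤ 1 + 30 * δ := by nlinarith [mul_pos hδ hδ, mul_pos (mul_pos hδ hδ) hδ]

lemma hedgeCurv_le {δ c d x x' : ℝ} (hδ : 0 < δ) (hδ1 : δ ≤ 1 / 2) (hc : 11 ≤ δ ^ 3 * c)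
    (hx : max x 0 ^ 2 ≤ 0.31 * δ ^ 3 * c ^ 2) (hd0 : 0 ≤ d) (hd : d * δ ^ 2 ≤ 9.6)
    (hx' : max x 0 - 1 ≤ max x' 0) :
    hedgeCurv c x ≤ (1 + 30 * δ) * (max x' 0 ^ 2 / (2 * (c + d)) * hedgePot (c + d) x') +
      (1 / 2 + 4 * δ) * hedgePot c x := by
  unfold hedgeCurv hedgePot
  set a := max x 0
  have ha0 : 0 ≤ a := le_max_right x 0
  have hc0 : 0 < c := pos_of_mul_pos_right (show 0 < δ ^ 3 * c by linarith) (by positivity)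
  have hδc : 44 ≤ δ * c := by
    nlinarith [mul_le_mul_of_nonneg_right hδ1 (by positivity : 0 ≤ δ ^ 2 * c)]
  have hac := le_of_sq_le_cube_mul_sq hδ hδ1 hc0 ha0 hx
  have hE := exp_add_one_sq_div_le hδ hδ1 hδc ha0 hac
  have hS : 0 ≤ max x' 0 ^ 2 / (2 * (c + d)) * exp (max x' 0 ^ 2 / (2 * (c + d))) := by
    positivity
  have h1 : 1 ≤ exp (a ^ 2 / (2 * c)) := one_le_exp (by positivity)
  rcases le_total (a ^ 2) (2 * δ * c) with hsmall | hbig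
  · have hT := mul_exp_le_of_sq_le hδ hδ1 hδc ha0 hac hsmall
    nlinarith [mul_le_mul_of_nonneg_left h1 hδ.le]
  · have hT := mul_exp_le_of_le_sq hδ hδ1 hc ha0 hx hd0 hd hx' hbig
    nlinarith [mul_le_mul_of_nonneg_left h1 hδ.le]

section Potential

variable {ι : Type*} [Fintype ι]

noncomputable def potential (R : ι → ℝ) (c : ℝ) : ℝ := ∑ i, hedgePot c (R i)

/-- `-c` times the derivative of `potential R` at the scale `c`. -/
noncomputable def potentialSlope (R : ι → ℝ) (c : ℝ) : ℝ :=
  ∑ i, max (R i) 0 ^ 2 / (2 * c) * hedgePot c (R i)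

lemma potential_lt_potential {R : ι → ℝ} {c c' : ℝ} (hc : 0 < c) (hcc' : c < c')
    (hR : ∃ i, 0 < R i) : potential R c' < potential R c := by
  obtain ⟨i, hi⟩ := hR
  exact sum_lt_sum (fun j _ => hedgePot_le_hedgePot hc hcc'.le (R j))
    ⟨i, mem_univ i, hedgePot_lt_hedgePot hc hcc' hi⟩

lemma le_of_potential_le_potential {R : ι → ℝ} {c c' : ℝ} (hc' : 0 < c') (hR : ∃ i, 0 < R i)
    (h : potential R c' ≤ potential R c) : c ≤ c' :=
  le_of_not_gt fun hlt => (potential_lt_potential hc' hlt hR).not_ge h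

lemma le_potentialSlope {R : ι → ℝ} {c : ℝ} (h : Fintype.card ι * exp 1 ≤ potential R c) :
    Fintype.card ι * exp 1 ≤ potentialSlope R c := by
  have hsum := sum_le_sum fun i (_ : i ∈ univ) =>
    two_mul_exp_sub_exp_one_le (max (R i) 0 ^ 2 / (2 * c))
  rw [sum_sub_distrib, ← mul_sum, sum_const, card_univ, nsmul_eq_mul] at hsum
  have h' : Fintype.card ι * exp 1 ≤ ∑ i, exp (max (R i) 0 ^ 2 / (2 * c)) := h
  exact (by linarith : _ ≤ _).trans hsum

lemma potential_add_mul_potentialSlope_le (R : ι → ℝ) {c d : ℝ} (hc : 0 < c) (hd : 0 ≤ d) :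
    potential R (c + d) + d / c * potentialSlope R (c + d) ≤ potential R c := by
  rw [potentialSlope, mul_sum, potential, potential, ← sum_add_distrib]
  refine sum_le_sum fun i _ => ?_
  have h := exp_add_mul_mul_exp_le (max (R i) 0 ^ 2 / (2 * (c + d))) (d / c)
  rwa [show max (R i) 0 ^ 2 / (2 * (c + d)) * (1 + d / c) = max (R i) 0 ^ 2 / (2 * c) by
    field_simp] at h

end Potential

namespace NormalHedge

variable {N : ℕ} (H : NormalHedge N)

/-- The regret increment of action `i` in round `t + 1` (not `t`). -/
noncomputable def instRegret (i : Fin N) (t : ℕ) : ℝ :=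
  (∑ j, H.p j (t + 1) * H.loss j (t + 1)) - H.loss i (t + 1)

lemma natCast_pos (H : NormalHedge N) : (0 : ℝ) < N := Nat.cast_pos.2 (by have := H.hN; omega)

lemma log_two_le_log (H : NormalHedge N) : 0.693 ≤ log N := by
  have h := log_le_log two_pos (by exact_mod_cast H.hN : (2 : ℝ) ≤ N)
  linarith [log_two_gt_d9]

lemma potential_eq {t : ℕ} (ht : 1 ≤ t) : potential (H.R · t) (H.c t) = N * exp 1 := by
  have h := H.c_eq t ht
  rw [one_div, inv_mul_eq_iff_eq_mul₀ H.natCast_pos.ne'] at h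
  exact h

lemma exists_regret_pos {t : ℕ} (ht : 1 ≤ t) : ∃ i, 0 < H.R i t := by
  by_contra! h
  have hpot : potential (H.R · t) (H.c t) = N := by simp [potential, hedgePot, h]
  have := H.potential_eq ht
  nlinarith [H.natCast_pos, exp_one_gt_two]

lemma R_succ (i : Fin N) (t : ℕ) : H.R i (t + 1) = H.R i t + H.instRegret i t := H.R_rec i t

lemma p_succ_eq {t : ℕ} (ht : 1 ≤ t) (i : Fin N) :
    H.p i (t + 1) = hedgeWeight (H.c t) (H.R i t) / ∑ j, hedgeWeight (H.c t) (H.R j t) :=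
  H.p_rec i t ht

lemma sum_hedgeWeight_pos {t : ℕ} (ht : 1 ≤ t) : 0 < ∑ j, hedgeWeight (H.c t) (H.R j t) := by
  have hc := H.c_pos t ht
  obtain ⟨i, hi⟩ := H.exists_regret_pos ht
  refine sum_pos' (fun j _ => by unfold hedgeWeight hedgePot; positivity) ⟨i, mem_univ i, ?_⟩
  unfold hedgeWeight hedgePot
  have : 0 < max (H.R i t) 0 := lt_max_of_lt_left hi
  positivity

lemma p_succ_nonneg {t : ℕ} (ht : 1 ≤ t) (i : Fin N) : 0 ≤ H.p i (t + 1) := by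
  have hc := H.c_pos t ht
  rw [H.p_succ_eq ht]
  unfold hedgeWeight hedgePot
  positivity

lemma sum_p_succ {t : ℕ} (ht : 1 ≤ t) : ∑ j, H.p j (t + 1) = 1 := by
  simp_rw [H.p_succ_eq ht, ← sum_div]
  exact div_self (H.sum_hedgeWeight_pos ht).ne'

lemma abs_instRegret_le {t : ℕ} (ht : 1 ≤ t) (i : Fin N) : |H.instRegret i t| ≤ 1 := by
  have hl := fun j => H.loss_mem j (t + 1) (by omega)
  have hA0 : 0 ≤ ∑ j, H.p j (t + 1) * H.loss j (t + 1) :=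
    sum_nonneg fun j _ => mul_nonneg (H.p_succ_nonneg ht j) (hl j).1
  have hA1 : ∑ j, H.p j (t + 1) * H.loss j (t + 1) ≤ 1 :=
    (sum_le_sum fun j _ => mul_le_of_le_one_right (H.p_succ_nonneg ht j) (hl j).2).trans_eq
      (H.sum_p_succ ht)
  unfold instRegret
  exact abs_le.2 ⟨by linarith [(hl i).2], by linarith [(hl i).1]⟩

lemma sum_instRegret_mul_hedgeWeight {t : ℕ} (ht : 1 ≤ t) :
    ∑ i, H.instRegret i t * hedgeWeight (H.c t) (H.R i t) = 0 := by
  simp only [instRegret, H.p_succ_eq ht]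
  exact sum_weightedMean_sub_mul_eq_zero _ _ (H.sum_hedgeWeight_pos ht).ne'

lemma sq_posRegret_le {t : ℕ} (ht : 1 ≤ t) (i : Fin N) :
    max (H.R i t) 0 ^ 2 ≤ 2 * H.c t * (1 + log N) := by
  have hc := H.c_pos t ht
  have hi : hedgePot (H.c t) (H.R i t) ≤ exp (log N + 1) := by
    rw [exp_add, exp_log H.natCast_pos, ← H.potential_eq ht]
    exact single_le_sum (f := fun j => hedgePot (H.c t) (H.R j t))
      (fun j _ => (exp_pos _).le) (mem_univ i)
  have := exp_le_exp.1 hi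
  rw [div_le_iff₀ (by positivity)] at this
  linarith

lemma posRegret_sub_one_le {t : ℕ} (ht : 1 ≤ t) (i : Fin N) :
    max (H.R i t) 0 - 1 ≤ max (H.R i (t + 1)) 0 := by
  have hr := (abs_le.1 (H.abs_instRegret_le ht i)).1
  rw [H.R_succ]
  exact sub_le_iff_le_add.2 (max_le (by linarith [le_max_left (H.R i t + H.instRegret i t) 0])
    (by linarith [le_max_right (H.R i t + H.instRegret i t) 0]))

lemma mul_exp_one_le_potential_succ {t : ℕ} (ht : 1 ≤ t) :
    N * exp 1 ≤ potential (H.R · (t + 1)) (H.c t) := by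
  calc (N : ℝ) * exp 1
      = potential (H.R · t) (H.c t) + ∑ i, H.instRegret i t * hedgeWeight (H.c t) (H.R i t) := by
        rw [H.potential_eq ht, H.sum_instRegret_mul_hedgeWeight ht, add_zero]
    _ ≤ potential (H.R · (t + 1)) (H.c t) := by
        rw [potential, potential, ← sum_add_distrib]
        refine sum_le_sum fun i _ => ?_
        rw [H.R_succ]
        exact hedgePot_add_mul_hedgeWeight_le (H.c_pos t ht) _ _

lemma potential_succ_le {t : ℕ} (ht : 1 ≤ t) :
    potential (H.R · (t + 1)) (H.c t) ≤
      N * exp 1 + (∑ i, hedgeCurv (H.c t) (H.R i t)) / H.c t := by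
  calc potential (H.R · (t + 1)) (H.c t)
      ≤ ∑ i, (hedgePot (H.c t) (H.R i t) + H.instRegret i t * hedgeWeight (H.c t) (H.R i t) +
          hedgeCurv (H.c t) (H.R i t) / H.c t) := by
        refine sum_le_sum fun i _ => ?_
        dsimp only
        rw [H.R_succ]
        exact hedgePot_add_le (H.c_pos t ht) _ (H.abs_instRegret_le ht i)
    _ = N * exp 1 + (∑ i, hedgeCurv (H.c t) (H.R i t)) / H.c t := by
        rw [sum_add_distrib, sum_add_distrib, H.sum_instRegret_mul_hedgeWeight ht, add_zero,
          ← sum_div]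
        exact congrArg (· + _) (H.potential_eq ht)

lemma c_le_c_succ {t : ℕ} (ht : 1 ≤ t) : H.c t ≤ H.c (t + 1) :=
  le_of_potential_le_potential (H.c_pos _ (by omega)) (H.exists_regret_pos (by omega))
    ((H.potential_eq (by omega)).trans_le (H.mul_exp_one_le_potential_succ ht))

lemma c_le_c {t₀ t : ℕ} (ht₀ : 1 ≤ t₀) (ht : t₀ ≤ t) : H.c t₀ ≤ H.c t := by
  induction t, ht using Nat.le_induction with
  | base => exact le_rfl
  | succ n hn ih => exact ih.trans (H.c_le_c_succ (ht₀.trans hn))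

lemma sq_posRegret_le_of_scale {t : ℕ} (ht : 1 ≤ t) {δ : ℝ}
    (hc : 16 * log N ≤ δ ^ 3 * H.c t) (i : Fin N) :
    max (H.R i t) 0 ^ 2 ≤ 0.31 * δ ^ 3 * H.c t ^ 2 := by
  have hc0 := H.c_pos t ht
  have hL := H.log_two_le_log
  nlinarith [H.sq_posRegret_le ht i, mul_le_mul_of_nonneg_left hc hc0.le]

lemma c_succ_le_add {t : ℕ} (ht : 1 ≤ t) {δ : ℝ} (hδ : 0 < δ) (hδ1 : δ ≤ 1 / 2)
    (hc : 16 * log N ≤ δ ^ 3 * H.c t) :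
    H.c (t + 1) ≤ H.c t + 3 / 2 * (1 + 49.19 * δ) := by
  set c := H.c t
  set d : ℝ := 3 / 2 * (1 + 49.19 * δ) with hd
  have hc0 : 0 < c := H.c_pos t ht
  have hd0 : 0 ≤ d := by positivity
  have hdδ : d * δ ^ 2 ≤ 9.6 := by nlinarith
  refine le_of_potential_le_potential (R := (H.R · (t + 1))) (by positivity)
    (H.exists_regret_pos (by omega)) ?_
  rw [H.potential_eq (by omega)]
  by_contra! hlt
  have hslope : N * exp 1 ≤ potentialSlope (H.R · (t + 1)) (c + d) := by
    simpa using le_potentialSlope (R := (H.R · (t + 1))) (by simpa using hlt.le)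
  have hcurv : ∑ i, hedgeCurv c (H.R i t) ≤
      (1 + 30 * δ) * potentialSlope (H.R · (t + 1)) (c + d) + (1 / 2 + 4 * δ) * (N * exp 1) := by
    rw [potentialSlope, mul_sum, ← H.potential_eq ht, potential, mul_sum, ← sum_add_distrib]
    refine sum_le_sum fun i _ => hedgeCurv_le hδ hδ1 (by linarith [H.log_two_le_log])
      (H.sq_posRegret_le_of_scale ht hc i) hd0 hdδ (H.posRegret_sub_one_le ht i)
  have hdrop := potential_add_mul_potentialSlope_le (H.R · (t + 1)) hc0 hd0
  have hstep := H.potential_succ_le ht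
  have hbal : ∑ i, hedgeCurv c (H.R i t) ≤ d * potentialSlope (H.R · (t + 1)) (c + d) := by
    nlinarith [mul_le_mul_of_nonneg_left hslope (by positivity : (0 : ℝ) ≤ 1 / 2 + 4 * δ),
      mul_le_mul_of_nonneg_left hslope hδ.le, mul_pos H.natCast_pos (exp_pos 1)]
  have : (∑ i, hedgeCurv c (H.R i t)) / c ≤ d / c * potentialSlope (H.R · (t + 1)) (c + d) := by
    rw [div_mul_eq_mul_div]
    exact div_le_div_of_nonneg_right hbal hc0.le
  linarith

end NormalHedge

/-- Lemma 3: if at some round `t₀` the scale satisfies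
`c t₀ ≥ (4 ln² N)/δ + (16 ln N)/δ³` with `0 < δ ≤ 1/2`, then for every `t ≥ t₀`,
`c (t+1) - c t ≤ (3/2)(1 + 49.19 δ)`. -/
theorem normalHedge_scale_increment_bound_fine {N : ℕ} (H : NormalHedge N)
    (t₀ : ℕ) (ht₀ : 1 ≤ t₀) (δ : ℝ) (hδ0 : 0 < δ) (hδ1 : δ ≤ 1 / 2)
    (hc : 4 * Real.log N ^ 2 / δ + 16 * Real.log N / δ ^ 3 ≤ H.c t₀)
    (t : ℕ) (ht : t₀ ≤ t) :
    H.c (t + 1) - H.c t ≤ 3 / 2 * (1 + 49.19 * δ) := by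
  have hct : 16 * log N ≤ δ ^ 3 * H.c t := by
    have h : 16 * log N / δ ^ 3 ≤ H.c t := by
      have : 0 ≤ 4 * log N ^ 2 / δ := by positivity
      linarith [H.c_le_c ht₀ ht]
    rw [div_le_iff₀ (by positivity)] at h
    linarith
  exact sub_le_iff_le_add'.2 (H.c_succ_le_add (ht₀.trans ht) hδ0 hδ1 hct)
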